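/- arXiv:1912.11049 — 2 statements merged into one kernel-verified Lean document; each statement's English description precedes it below -/
import Mathlib

section
/- A linear CPTP map E on operators of ℂ^{D_A} ⊗ ℂ^{D_B} is QI-preserving (i.e., maps every QI state to a QI state) if and only if for every a,b ∈ {0,…,D_A−1} and every j ∈ {0,…,D_B−1}, the state E(ρ_{a,b} ⊗ |j⟩⟨j|) is a QI state. -/
open Matrix Finset
open scoped Kronecker ComplexOrder

/-- A density operator: positive semidefinite with unit trace. -/
def IsDensity {n : Type*} [Fintype n] (ρ : Matrix n n ℂ) : Prop :=
  ρ.PosSemidef ∧ ρ.trace = 1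

/-- A quantum-incoherent (QI) state on a bipartite system with quantum part `Q`
and incoherent part `B` (with its fixed reference basis): a state of the form
`∑ j, p j • ρ j ⊗ |j⟩⟨j|`. -/
def IsQI {Q B : Type*} [Fintype Q] [Fintype B] [DecidableEq B]
    (σ : Matrix (Q × B) (Q × B) ℂ) : Prop :=
  ∃ (p : B → ℝ) (ρ : B → Matrix Q Q ℂ),
    (∀ j, 0 ≤ p j) ∧ (∑ j, p j = 1) ∧ (∀ j, IsDensity (ρ j)) ∧
    σ = ∑ j, (p j : ℂ) • (ρ j ⊗ₖ Matrix.single j j 1)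

/-- An incoherent state: a density operator diagonal in the reference basis. -/
def IsIncoherent {n : Type*} [Fintype n] (σ : Matrix n n ℂ) : Prop :=
  IsDensity σ ∧ ∀ x y, x ≠ y → σ x y = 0

/-- The extension `id_k ⊗ E` of a linear map on matrices. -/
def tensId {n m : Type*} (k : Type*)
    (E : Matrix n n ℂ →ₗ[ℂ] Matrix m m ℂ) :
    Matrix (k × n) (k × n) ℂ →ₗ[ℂ] Matrix (k × m) (k × m) ℂ where
  toFun X := Matrix.of fun p q => E (Matrix.of fun a b => X (p.1, a) (q.1, b)) p.2 q.2
  map_add' X Y := by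
    ext p q
    show E (Matrix.of fun a b => (X + Y) (p.1, a) (q.1, b)) p.2 q.2 = _
    rw [show (Matrix.of fun a b => (X + Y) (p.1, a) (q.1, b)) =
        (Matrix.of fun a b => X (p.1, a) (q.1, b)) +
        (Matrix.of fun a b => Y (p.1, a) (q.1, b)) from rfl, map_add]
    rfl
  map_smul' c X := by
    ext p q
    show E (Matrix.of fun a b => (c • X) (p.1, a) (q.1, b)) p.2 q.2 = _
    rw [show (Matrix.of fun a b => (c • X) (p.1, a) (q.1, b)) =
        c • (Matrix.of fun a b => X (p.1, a) (q.1, b)) from rfl, _root_.map_smul]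
    rfl

/-- Complete positivity: `id_k ⊗ E` preserves positive semidefiniteness for all `k`. -/
def IsCompletelyPositive {n m : Type*} [Fintype n] [Fintype m]
    (E : Matrix n n ℂ →ₗ[ℂ] Matrix m m ℂ) : Prop :=
  ∀ (k : ℕ) (X : Matrix (Fin k × n) (Fin k × n) ℂ), X.PosSemidef →
    ((tensId (Fin k) E) X).PosSemidef

/-- A completely positive trace-preserving (CPTP) linear map. -/
def IsCPTP {n m : Type*} [Fintype n] [Fintype m]
    (E : Matrix n n ℂ →ₗ[ℂ] Matrix m m ℂ) : Prop :=
  IsCompletelyPositive E ∧ ∀ X, (E X).trace = X.trace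

/-- The basis density operators `ρ_{a,b}` built from the reference basis. -/
noncomputable def rhoBasis (D : ℕ) (a b : Fin D) : Matrix (Fin D) (Fin D) ℂ :=
  if a = b then Matrix.single a a 1
  else if (a : ℕ) < b then
    (1 / 2 : ℂ) • (Matrix.single a a 1 + Matrix.single a b 1 +
      Matrix.single b a 1 + Matrix.single b b 1)
  else
    (1 / 2 : ℂ) • (Matrix.single a a 1 + (-Complex.I) • Matrix.single a b 1 +
      Complex.I • Matrix.single b a 1 + Matrix.single b b 1)

/-! A state is QI exactly when it is a density operator whose entries between different
incoherent indices vanish. A CPTP map sends density operators to density operators, and the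
vanishing of the off-diagonal blocks of `E (M ⊗ |j⟩⟨j|)` is a linear condition on `M`; since
the `ρ_{a,b}` span all operators on `A`, it suffices to check it on them. -/

lemma posSemidef_single_self {n : Type*} [Fintype n] [DecidableEq n] (i : n) :
    (single i i (1 : ℂ)).PosSemidef := by
  rw [single_eq_single_vecMulVec_single]
  simpa using posSemidef_vecMulVec_self_star (Pi.single i (1 : ℂ))

lemma isDensity_single_self {n : Type*} [Fintype n] [DecidableEq n] (i : n) :
    IsDensity (single i i (1 : ℂ)) :=
  ⟨posSemidef_single_self i, trace_single_eq_same _ _⟩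

lemma Matrix.PosSemidef.exists_isDensity_eq_smul {n : Type*} [Fintype n] [DecidableEq n]
    [Nonempty n] {M : Matrix n n ℂ} (hM : M.PosSemidef) :
    ∃ ρ, IsDensity ρ ∧ M = (M.trace.re : ℂ) • ρ := by
  have htr : M.trace = (M.trace.re : ℂ) :=
    Complex.eq_re_of_ofReal_le (r := 0) (by simpa using hM.trace_nonneg)
  have hre : 0 ≤ M.trace.re := by simpa using Complex.re_le_re hM.trace_nonneg
  rcases eq_or_ne M.trace 0 with h | h
  · obtain ⟨i⟩ := ‹Nonempty n›
    exact ⟨single i i 1, isDensity_single_self i, by simp [hM.trace_eq_zero_iff.mp h]⟩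
  · have hre' : M.trace.re ≠ 0 := fun h' => h (by rw [htr, h', Complex.ofReal_zero])
    refine ⟨(M.trace.re⁻¹ : ℂ) • M, ⟨hM.smul ?_, ?_⟩, ?_⟩
    · exact_mod_cast inv_nonneg.mpr hre
    · rw [trace_smul, smul_eq_mul, htr, Complex.ofReal_re,
        inv_mul_cancel₀ (by exact_mod_cast hre')]
    · rw [smul_smul, mul_inv_cancel₀ (by exact_mod_cast hre'), one_smul]

section QI

variable {Q B : Type*} [DecidableEq B]

variable (Q B) in
/-- Blocks are indexed by the second (incoherent) factor, as in `Matrix.blockDiagonal`. -/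
def blockDiagonalSubmodule : Submodule ℂ (Matrix (Q × B) (Q × B) ℂ) where
  carrier := {σ | ∀ x y, x.2 ≠ y.2 → σ x y = 0}
  add_mem' hσ hτ x y hxy := by simp [hσ x y hxy, hτ x y hxy]
  zero_mem' _ _ _ := rfl
  smul_mem' c σ hσ x y hxy := by simp [hσ x y hxy]

lemma kronecker_single_mem_blockDiagonalSubmodule (ρ : Matrix Q Q ℂ) (j : B) :
    ρ ⊗ₖ single j j 1 ∈ blockDiagonalSubmodule Q B := by
  rintro ⟨a, k⟩ ⟨b, l⟩ (hkl : k ≠ l)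
  simp only [kronecker_apply, single_apply]
  grind

lemma eq_sum_submatrix_kronecker_single [Fintype B] {σ : Matrix (Q × B) (Q × B) ℂ}
    (hσ : σ ∈ blockDiagonalSubmodule Q B) :
    σ = ∑ j, σ.submatrix (·, j) (·, j) ⊗ₖ single j j 1 := by
  ext ⟨a, k⟩ ⟨b, l⟩
  rcases eq_or_ne k l with rfl | hkl
  · simp [Matrix.sum_apply, single_apply]
  · simp only [Matrix.sum_apply, kronecker_apply, submatrix_apply, single_apply,
      hσ (a, k) (b, l) hkl]
    exact (Finset.sum_eq_zero fun c _ => by grind).symm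

variable [Fintype Q] [Fintype B]

lemma IsDensity.kronecker_single {ρ : Matrix Q Q ℂ} (hρ : IsDensity ρ) (j : B) :
    IsDensity (ρ ⊗ₖ single j j 1) :=
  ⟨hρ.1.kronecker (posSemidef_single_self j), by
    rw [trace_kronecker, hρ.2, trace_single_eq_same, one_mul]⟩

lemma IsDensity.isQI_kronecker_single {ρ : Matrix Q Q ℂ} (hρ : IsDensity ρ) (j : B) :
    IsQI (ρ ⊗ₖ single j j 1) :=
  ⟨Pi.single j 1, fun _ => ρ, fun _ => by simp only [Pi.single_apply]; positivity, by simp,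
    fun _ => hρ, by simp [Pi.single_apply]⟩

lemma IsQI.isDensity {σ : Matrix (Q × B) (Q × B) ℂ} (hσ : IsQI σ) : IsDensity σ := by
  obtain ⟨p, ρ, hp, hsum, hρ, rfl⟩ := hσ
  refine ⟨posSemidef_sum _ fun j _ => ((hρ j).kronecker_single j).1.smul ?_, ?_⟩
  · exact_mod_cast hp j
  · simp only [trace_sum, trace_smul, ((hρ _).kronecker_single _).2, smul_eq_mul, mul_one]
    exact_mod_cast hsum

lemma IsQI.mem_blockDiagonalSubmodule {σ : Matrix (Q × B) (Q × B) ℂ} (hσ : IsQI σ) :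
    σ ∈ blockDiagonalSubmodule Q B := by
  obtain ⟨p, ρ, -, -, -, rfl⟩ := hσ
  exact sum_mem fun j _ => Submodule.smul_mem _ _ (kronecker_single_mem_blockDiagonalSubmodule _ _)

omit [DecidableEq B] in
lemma trace_eq_sum_trace_submatrix (σ : Matrix (Q × B) (Q × B) ℂ) :
    σ.trace = ∑ j, (σ.submatrix (·, j) (·, j)).trace :=
  Fintype.sum_prod_type_right _

lemma isQI_of_isDensity_of_mem [DecidableEq Q] {σ : Matrix (Q × B) (Q × B) ℂ}
    (hσ : IsDensity σ) (hmem : σ ∈ blockDiagonalSubmodule Q B) : IsQI σ := by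
  have : Nonempty Q := by
    by_contra h
    rw [not_nonempty_iff] at h
    simpa [trace] using hσ.2
  choose ρ hρ hblock using fun j => (hσ.1.submatrix (·, j)).exists_isDensity_eq_smul
  refine ⟨fun j => (σ.submatrix (·, j) (·, j)).trace.re, ρ,
    fun j => by simpa using Complex.re_le_re (hσ.1.submatrix (·, j)).trace_nonneg, ?_, hρ, ?_⟩
  · rw [← Complex.re_sum, ← trace_eq_sum_trace_submatrix, hσ.2, Complex.one_re]
  · conv_lhs => rw [eq_sum_submatrix_kronecker_single hmem]
    exact Finset.sum_congr rfl fun j _ => by rw [← smul_kronecker, ← hblock j]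

lemma isQI_iff [DecidableEq Q] {σ : Matrix (Q × B) (Q × B) ℂ} :
    IsQI σ ↔ IsDensity σ ∧ σ ∈ blockDiagonalSubmodule Q B :=
  ⟨fun h => ⟨h.isDensity, h.mem_blockDiagonalSubmodule⟩,
    fun h => isQI_of_isDensity_of_mem h.1 h.2⟩

end QI

section RhoBasis

variable {n : Type*} [Fintype n] [DecidableEq n]

lemma isDensity_half_smul_single_add_single {a b : n} (hab : a ≠ b) {c : ℂ}
    (hc : c * star c = 1) :
    IsDensity ((1 / 2 : ℂ) • (single a a 1 + star c • single a b 1 + c • single b a 1 +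
      single b b 1)) := by
  have hvec : single a a (1 : ℂ) + star c • single a b 1 + c • single b a 1 + single b b 1 =
      vecMulVec (Pi.single a 1 + Pi.single b c) (star (Pi.single a 1 + Pi.single b c)) := by
    ext i j
    simp only [vecMulVec_apply, Matrix.add_apply, Matrix.smul_apply, single_apply, Pi.add_apply,
      Pi.star_apply, Pi.single_apply, smul_eq_mul]
    split_ifs <;> grind [star_zero, star_one]
  constructor
  · rw [hvec]
    exact (posSemidef_vecMulVec_self_star _).smul (by norm_num [Complex.nonneg_iff])
  · simp [trace_single_eq_of_ne _ _ _ hab, trace_single_eq_of_ne _ _ _ hab.symm]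
    norm_num

variable {D : ℕ}

lemma rhoBasis_self (a : Fin D) : rhoBasis D a a = single a a 1 := if_pos rfl

lemma rhoBasis_of_lt {a b : Fin D} (h : a < b) :
    rhoBasis D a b =
      (1 / 2 : ℂ) • (single a a 1 + single a b 1 + single b a 1 + single b b 1) := by
  rw [rhoBasis, if_neg h.ne, if_pos (Fin.lt_def.mp h)]

lemma rhoBasis_of_gt {a b : Fin D} (h : b < a) :
    rhoBasis D a b = (1 / 2 : ℂ) • (single a a 1 + (-Complex.I) • single a b 1 +
      Complex.I • single b a 1 + single b b 1) := by
  rw [rhoBasis, if_neg h.ne', if_neg (not_lt.mpr (Fin.le_def.mp h.le))]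

lemma rhoBasis_isDensity (a b : Fin D) : IsDensity (rhoBasis D a b) := by
  rcases lt_trichotomy a b with h | rfl | h
  · rw [rhoBasis_of_lt h]
    simpa using isDensity_half_smul_single_add_single h.ne (c := 1) (by simp)
  · rw [rhoBasis_self]
    exact isDensity_single_self a
  · rw [rhoBasis_of_gt h]
    simpa using isDensity_half_smul_single_add_single h.ne' (c := Complex.I) (by simp)

lemma single_mem_span_rhoBasis_of_lt {a b : Fin D} (h : a < b) :
    single a b 1 ∈ Submodule.span ℂ (Set.range (Function.uncurry (rhoBasis D))) ∧
      single b a 1 ∈ Submodule.span ℂ (Set.range (Function.uncurry (rhoBasis D))) := by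
  set S := Submodule.span ℂ (Set.range (Function.uncurry (rhoBasis D)))
  have mem (a b : Fin D) : rhoBasis D a b ∈ S := Submodule.subset_span ⟨(a, b), rfl⟩
  have hab : single a b 1 = rhoBasis D a b - Complex.I • rhoBasis D b a -
      ((1 - Complex.I) / 2) • (rhoBasis D a a + rhoBasis D b b) := by
    rw [rhoBasis_of_lt h, rhoBasis_of_gt h, rhoBasis_self, rhoBasis_self]
    match_scalars <;> ring_nf <;> norm_num
  have hba : single b a 1 = rhoBasis D a b + Complex.I • rhoBasis D b a -
      ((1 + Complex.I) / 2) • (rhoBasis D a a + rhoBasis D b b) := by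
    rw [rhoBasis_of_lt h, rhoBasis_of_gt h, rhoBasis_self, rhoBasis_self]
    match_scalars <;> ring_nf <;> norm_num
  have hdiag : rhoBasis D a a + rhoBasis D b b ∈ S := S.add_mem (mem a a) (mem b b)
  constructor
  · rw [hab]
    exact S.sub_mem (S.sub_mem (mem a b) (S.smul_mem _ (mem b a))) (S.smul_mem _ hdiag)
  · rw [hba]
    exact S.sub_mem (S.add_mem (mem a b) (S.smul_mem _ (mem b a))) (S.smul_mem _ hdiag)

lemma span_rhoBasis_eq_top (D : ℕ) :
    Submodule.span ℂ (Set.range (Function.uncurry (rhoBasis D))) = ⊤ := by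
  rw [eq_top_iff, ← (stdBasis ℂ (Fin D) (Fin D)).span_eq, Submodule.span_le]
  rintro _ ⟨⟨a, b⟩, rfl⟩
  rw [stdBasis_eq_single]
  rcases lt_trichotomy a b with h | rfl | h
  · exact (single_mem_span_rhoBasis_of_lt h).1
  · exact Submodule.subset_span ⟨(a, a), rhoBasis_self a⟩
  · exact (single_mem_span_rhoBasis_of_lt h).2

end RhoBasis

lemma IsCompletelyPositive.posSemidef_map {n m : Type*} [Fintype n] [Fintype m]
    {E : Matrix n n ℂ →ₗ[ℂ] Matrix m m ℂ} (hE : IsCompletelyPositive E) {X : Matrix n n ℂ}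
    (hX : X.PosSemidef) : (E X).PosSemidef :=
  (hE 1 (X.submatrix Prod.snd Prod.snd) (hX.submatrix _)).submatrix (fun s => ((0 : Fin 1), s))

lemma IsCPTP.isDensity_map {n m : Type*} [Fintype n] [Fintype m]
    {E : Matrix n n ℂ →ₗ[ℂ] Matrix m m ℂ} (hE : IsCPTP E) {X : Matrix n n ℂ}
    (hX : IsDensity X) : IsDensity (E X) :=
  ⟨hE.1.posSemidef_map hX.1, (hE.2 X).trans hX.2⟩

/-- a CPTP map `E` on `AB` is QI-preserving iff `E (ρ_{a,b} ⊗ |j⟩⟨j|)` is a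
QI state for all `a, b, j`. -/
theorem qip_iff_basis_condition (DA DB : ℕ)
    (E : Matrix (Fin DA × Fin DB) (Fin DA × Fin DB) ℂ →ₗ[ℂ]
      Matrix (Fin DA × Fin DB) (Fin DA × Fin DB) ℂ)
    (hE : IsCPTP E) :
    (∀ σ, IsQI σ → IsQI (E σ)) ↔
      ∀ (a b : Fin DA) (j : Fin DB),
        IsQI (E (rhoBasis DA a b ⊗ₖ Matrix.single j j 1)) := by
  refine ⟨fun h a b j => h _ ((rhoBasis_isDensity a b).isQI_kronecker_single j),
    fun hbasis σ hσ => isQI_iff.mpr ⟨hE.isDensity_map hσ.isDensity, ?_⟩⟩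
  have hblock (j : Fin DB) (M : Matrix (Fin DA) (Fin DA) ℂ) :
      E (M ⊗ₖ single j j 1) ∈ blockDiagonalSubmodule (Fin DA) (Fin DB) := by
    let L := E ∘ₗ (kroneckerBilinear (R := ℂ)).flip (single j j 1)
    have hspan : Submodule.span ℂ (Set.range (Function.uncurry (rhoBasis DA))) ≤
        (blockDiagonalSubmodule (Fin DA) (Fin DB)).comap L :=
      Submodule.span_le.mpr <| by
        rintro _ ⟨⟨a, b⟩, rfl⟩
        exact (hbasis a b j).mem_blockDiagonalSubmodule
    exact (span_rhoBasis_eq_top DA ▸ hspan) Submodule.mem_top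
  obtain ⟨p, ρ, -, -, -, rfl⟩ := hσ
  simp only [map_sum, map_smul]
  exact sum_mem fun j _ => Submodule.smul_mem _ _ (hblock j (ρ j))
end

section
/- The SWAP unitary channel on ℂ^d ⊗ ℂ^d maps every incoherent state to an incoherent state (it is MIO), but for d ≥ 2 it is not a PPT operation: the partial transpose (on the input-A and output-A systems) of the Choi operator of SWAP is not positive semidefinite. Hence (MIO ∩ PPT) ⊊ MIO. -/
open Matrix Finset
open scoped Kronecker ComplexOrder

/-- The SWAP unitary channel `ρ ↦ U ρ U†` on `ℂ^d ⊗ ℂ^d`. -/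
def swapMap (d : ℕ) :
    Matrix (Fin d × Fin d) (Fin d × Fin d) ℂ →ₗ[ℂ] Matrix (Fin d × Fin d) (Fin d × Fin d) ℂ where
  toFun X := Matrix.of fun p q => X (p.2, p.1) (q.2, q.1)
  map_add' X Y := rfl
  map_smul' c X := rfl

/-- The Choi operator of a bipartite map, indexed by (output, input). -/
def choiOf (dA dB : ℕ)
    (E : Matrix (Fin dA × Fin dB) (Fin dA × Fin dB) ℂ →ₗ[ℂ]
      Matrix (Fin dA × Fin dB) (Fin dA × Fin dB) ℂ) :
    Matrix ((Fin dA × Fin dB) × (Fin dA × Fin dB)) ((Fin dA × Fin dB) × (Fin dA × Fin dB)) ℂ :=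
  Matrix.of fun p q => E (Matrix.single p.2 q.2 1) p.1 q.1

/-- Partial transpose of the Choi operator on the `A` systems (output-A and input-A). -/
def choiPTA (dA dB : ℕ)
    (E : Matrix (Fin dA × Fin dB) (Fin dA × Fin dB) ℂ →ₗ[ℂ]
      Matrix (Fin dA × Fin dB) (Fin dA × Fin dB) ℂ) :
    Matrix ((Fin dA × Fin dB) × (Fin dA × Fin dB)) ((Fin dA × Fin dB) × (Fin dA × Fin dB)) ℂ :=
  Matrix.of fun p q =>
    choiOf dA dB E ((q.1.1, p.1.2), (q.2.1, p.2.2)) ((p.1.1, q.1.2), (p.2.1, q.2.2))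

namespace Matrix

lemma PosSemidef.apply_eq_zero_of_diag_eq_zero {𝕜 n : Type*} [RCLike 𝕜] [Fintype n]
    {A : Matrix n n 𝕜} (hA : A.PosSemidef) {j : n} (hj : A j j = 0) (i : n) : A i j = 0 := by
  classical
  have hcol : A *ᵥ Pi.single j 1 = 0 :=
    (hA.dotProduct_mulVec_zero_iff _).mp (by simpa [mulVec_single_one] using hj)
  simpa [mulVec_single_one] using congrFun hcol i

end Matrix

lemma IsIncoherent.submatrix_equiv {m n : Type*} [Fintype m] [Fintype n]
    {σ : Matrix n n ℂ} (hσ : IsIncoherent σ) (e : m ≃ n) : IsIncoherent (σ.submatrix e e) :=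
  ⟨⟨hσ.1.1.submatrix e, by rw [← hσ.1.2]; exact e.sum_comp fun x => σ x x⟩,
    fun _ _ hxy => hσ.2 _ _ (e.injective.ne hxy)⟩

lemma swapMap_apply (d : ℕ) (X : Matrix (Fin d × Fin d) (Fin d × Fin d) ℂ) :
    swapMap d X = X.submatrix (Equiv.prodComm _ _) (Equiv.prodComm _ _) :=
  rfl

/-- The partial transpose vanishes on the diagonal at `((i,i),(j,j))` but not in that column,
at `((j,j),(i,i))`; a positive semidefinite matrix cannot do this. -/
lemma not_posSemidef_choiPTA_swapMap {d : ℕ} {i j : Fin d} (hij : i ≠ j) :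
    ¬ (choiPTA d d (swapMap d)).PosSemidef := by
  intro hpsd
  have hdiag : choiPTA d d (swapMap d) ((i, i), (j, j)) ((i, i), (j, j)) = 0 := by
    simp [choiPTA, choiOf, swapMap_apply, single_apply, hij.symm]
  have hoff : choiPTA d d (swapMap d) ((j, j), (i, i)) ((i, i), (j, j)) = 1 := by
    simp [choiPTA, choiOf, swapMap_apply, single_apply]
  simpa [hoff] using hpsd.apply_eq_zero_of_diag_eq_zero hdiag ((j, j), (i, i))

/-- the SWAP channel on `ℂ^d ⊗ ℂ^d` maps every incoherent state to an
incoherent state (MIO), but for `d ≥ 2` the partial transpose (on the `A` systems) of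
its Choi operator is not positive semidefinite, so SWAP is not PPT.
Hence (MIO ∩ PPT) ⊊ MIO. -/
theorem swap_mio_not_ppt (d : ℕ) :
    (∀ σ, IsIncoherent σ → IsIncoherent (swapMap d σ)) ∧
      (2 ≤ d → ¬ (choiPTA d d (swapMap d)).PosSemidef) := by
  refine ⟨fun σ hσ => swapMap_apply d σ ▸ hσ.submatrix_equiv _, fun hd => ?_⟩
  exact not_posSemidef_choiPTA_swapMap (i := ⟨0, by omega⟩) (j := ⟨1, by omega⟩) (by simp)
end
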